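/- There exist two strength vectors β and β' on a feature set of four elements that induce the same strict order on the features (for all features i and j, β_i < β_j if and only if β'_i < β'_j), and two disjoint nonempty subsets R and R' of the features, such that ρ_{R>R'}(β) > ρ_{R'>R}(β) while ρ_{R>R'}(β') < ρ_{R'>R}(β'). Consequently, knowing only the order of feature costs, without their exact numeric values, does not determine whether a given recourse is ideal, i.e., not all possible recourses can be disambiguated. -/

import Mathlib

open Real Finset

/-- Bradley-Terry probability that feature `f` is easier to modify than `g`. -/
noncomputable def btProb {F : Type*} (β : F → ℝ) (f g : F) : ℝ :=
  Real.exp (β f) / (Real.exp (β f) + Real.exp (β g))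

/-- Probability that recourse `R1` is easier to implement than `R2`. -/
noncomputable def rho {F : Type*} (β : F → ℝ) (R1 R2 : Finset F) : ℝ :=
  (∑ f ∈ R1, ∑ g ∈ R2, btProb β f g) / (R1.card * R2.card)

/-- There exist two strength vectors on four features inducing the same strict
order on the features, and two disjoint nonempty recourses `R`, `R'`, such that
under one vector `ρ_{R>R'} > ρ_{R'>R}` while under the other
`ρ_{R>R'} < ρ_{R'>R}`: the order of feature costs alone does not disambiguate
recourses. -/
theorem order_insufficient_to_disambiguate :
    ∃ (β β' : Fin 4 → ℝ) (R R' : Finset (Fin 4)),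
      (∀ i j : Fin 4, β i < β j ↔ β' i < β' j) ∧
      R.Nonempty ∧ R'.Nonempty ∧ Disjoint R R' ∧
      rho β R R' > rho β R' R ∧ rho β' R R' < rho β' R' R := by
  refine ⟨![Real.log 10, Real.log 11, Real.log 12, Real.log 10000],
    ![Real.log 1, Real.log 100, Real.log 110, Real.log 120],
    {0, 3}, {1, 2}, ?_, ⟨0, by decide⟩, ⟨1, by decide⟩, by decide, ?_, ?_⟩
  · intro i j
    fin_cases i <;> fin_cases j <;>
      simp [Real.log_lt_log_iff] <;> norm_num <;>
      first
        | exact Real.log_pos (by norm_num)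
        | exact Real.log_nonneg (by norm_num)
  · simp only [rho, btProb, Finset.sum_pair (show (0:Fin 4) ≠ 3 by decide),
      Finset.sum_pair (show (1:Fin 4) ≠ 2 by decide),
      Finset.card_pair (show (0:Fin 4) ≠ 3 by decide),
      Finset.card_pair (show (1:Fin 4) ≠ 2 by decide)]
    norm_num [Real.exp_log, Matrix.cons_val_two, Matrix.cons_val_three]
  · simp only [rho, btProb, Finset.sum_pair (show (0:Fin 4) ≠ 3 by decide),
      Finset.sum_pair (show (1:Fin 4) ≠ 2 by decide),
      Finset.card_pair (show (0:Fin 4) ≠ 3 by decide),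
      Finset.card_pair (show (1:Fin 4) ≠ 2 by decide)]
    norm_num [Real.exp_log, Matrix.cons_val_two, Matrix.cons_val_three]
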